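/- Let (X, T, D) be a rank-r MGDS satisfying (DC). For every x ∈ X, n ∈ ℕ^r with x ∈ D n, and every coordinate j ∈ {1,…,r}, one has σ(T n x)_j + n_j = σ(x)_j in ℕ∞ (that is, σ(T n x) = σ(x) − n). -/

import Mathlib

/-- A multiply generated dynamical system (MGDS) of rank `r` on a set `X`:
a family of subsets `D n ⊆ X` and maps `T n : X → X` indexed by `n ∈ ℕ^r`
such that `D 0 = X`, `T 0 = id`, `D (m+n) = {x ∈ D n | T n x ∈ D m}` and
`T (m+n) x = T m (T n x)` on `D (m+n)`. -/
structure MGDS (r : ℕ) (X : Type*) where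
  D : (Fin r → ℕ) → Set X
  T : (Fin r → ℕ) → X → X
  D_zero : D 0 = Set.univ
  T_zero : ∀ x, T 0 x = x
  D_add : ∀ m n, D (m + n) = {x ∈ D n | T n x ∈ D m}
  T_add : ∀ m n, ∀ x ∈ D (m + n), T (m + n) x = T m (T n x)

/-- The domain condition (DC): `D m ∩ D n ⊆ D (m ⊔ n)` where `⊔` is the
coordinatewise maximum. -/
def MGDS.DC {r : ℕ} {X : Type*} (S : MGDS r X) : Prop :=
  ∀ m n : Fin r → ℕ, S.D m ∩ S.D n ⊆ S.D (m ⊔ n)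

/-- The exit time `σ(x) ∈ (ℕ∞)^r`: coordinatewise,
`σ(x)_j = sup { n_j : n ∈ ℕ^r, x ∈ D n }`, the supremum taken in `ℕ∞`. -/
noncomputable def MGDS.exitTime {r : ℕ} {X : Type*} (S : MGDS r X) (x : X) : Fin r → ℕ∞ :=
  fun j => ⨆ (n : Fin r → ℕ) (_ : x ∈ S.D n), (n j : ℕ∞)

/-!
If `T n x ∈ D m` then `x ∈ D (m + n)`, which gives `σ(T n x) + n ≤ σ(x)`. Conversely, if
`x ∈ D k` then (DC) puts `x` in `D (k ⊔ n)`, hence `T n x ∈ D (k ⊔ n - n)`, and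
`k ≤ (k ⊔ n - n) + n` gives `σ(x) ≤ σ(T n x) + n`.
-/

namespace MGDS

variable {r : ℕ} {X : Type*}

theorem mem_D_add_iff (S : MGDS r X) {m n : Fin r → ℕ} {x : X} :
    x ∈ S.D (m + n) ↔ x ∈ S.D n ∧ S.T n x ∈ S.D m := by
  rw [S.D_add]
  rfl

theorem mem_D_zero (S : MGDS r X) (x : X) : x ∈ S.D 0 :=
  S.D_zero ▸ Set.mem_univ x

theorem le_exitTime (S : MGDS r X) {x : X} {m : Fin r → ℕ} (hm : x ∈ S.D m) (j : Fin r) :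
    (m j : ℕ∞) ≤ S.exitTime x j :=
  le_iSup₂ (f := fun k (_ : x ∈ S.D k) => (k j : ℕ∞)) m hm

theorem exitTime_add_le (S : MGDS r X) {x : X} {n : Fin r → ℕ} (hx : x ∈ S.D n) (j : Fin r) :
    S.exitTime (S.T n x) j + n j ≤ S.exitTime x j := by
  rw [exitTime, ENat.biSup_add' ⟨0, S.mem_D_zero (S.T n x)⟩]
  refine iSup₂_le fun m hm => ?_
  simpa using S.le_exitTime (S.mem_D_add_iff.2 ⟨hx, hm⟩) j

theorem DC.T_mem_D_sup_sub {S : MGDS r X} (hDC : S.DC) {x : X} {n k : Fin r → ℕ}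
    (hn : x ∈ S.D n) (hk : x ∈ S.D k) : S.T n x ∈ S.D (k ⊔ n - n) := by
  have hkn := hDC k n ⟨hk, hn⟩
  have hsum : k ⊔ n - n + n = k ⊔ n := tsub_add_cancel_of_le le_sup_right
  rw [← hsum] at hkn
  exact (S.mem_D_add_iff.1 hkn).2

theorem DC.exitTime_le_exitTime_add {S : MGDS r X} (hDC : S.DC) {x : X} {n : Fin r → ℕ}
    (hx : x ∈ S.D n) (j : Fin r) : S.exitTime x j ≤ S.exitTime (S.T n x) j + n j := by
  refine iSup₂_le fun k hk => ?_
  calc (k j : ℕ∞) ≤ ((k ⊔ n - n) j + n j : ℕ) := by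
        exact_mod_cast (le_sup_left : k j ≤ k j ⊔ n j).trans le_tsub_add
    _ ≤ S.exitTime (S.T n x) j + n j := by
        push_cast
        gcongr
        exact S.le_exitTime (hDC.T_mem_D_sup_sub hx hk) j

end MGDS

/-- in an MGDS with (DC), for `x ∈ D n` one has
`σ(T n x)_j + n_j = σ(x)_j` in `ℕ∞` for every coordinate `j`
(that is, `σ(T n x) = σ(x) - n`). -/
theorem mgds_exitTime_shift
    {r : ℕ} {X : Type*} (S : MGDS r X) (hDC : S.DC)
    (x : X) (n : Fin r → ℕ) (hx : x ∈ S.D n) :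
    ∀ j, S.exitTime (S.T n x) j + (n j : ℕ∞) = S.exitTime x j :=
  fun j => le_antisymm (S.exitTime_add_le hx j) (hDC.exitTime_le_exitTime_add hx j)
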